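/- Penalty-approximation bound for the inner solution (appendix Lemma). Assume the mixing-matrix assumption with σ < 1 and that each g_i(x,·) is μ_g-strongly convex and continuous. Fix x ∈ ℝ^{n d1}. Let y*(x) be the minimizer of y ↦ 1ᵀ𝐠(x,y) over the consensus subspace {y : (I_{n d2}−𝐖)y = 0}, and for β > 0 let y̌*(x) be the minimizer of G(x,y) := (1/(2β)) yᵀ(I_{n d2}−𝐖)y + 1ᵀ𝐠(x,y). Then there exists a constant L̂_g > 0, independent of β, such that for all β ∈ (0, 1]: ‖y*(x) − y̌*(x)‖ ≤ 2 L̂_g β/(1−σ) + 2 L̂_g β^{1/2}/((1−σ)^{1/2} μ_g^{1/2}). -/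

import Mathlib

open Matrix Kronecker Finset Function
open scoped RealInnerProductSpace

noncomputable section

/-- Euclidean space `ℝ^d`. -/
abbrev Vec (d : ℕ) : Type := EuclideanSpace ℝ (Fin d)

/-- Concatenated (stacked) Euclidean space `ℝ^{n·d}`, with `n` blocks of size `d`. -/
abbrev BVec (n d : ℕ) : Type := EuclideanSpace ℝ (Fin n × Fin d)

/-- Block `i` of a concatenated vector `x = [x₁; …; xₙ]`. -/
def blk {n d : ℕ} (x : BVec n d) (i : Fin n) : Vec d := WithLp.toLp 2 (fun a => x (i, a))

/-- Block-diagonal matrix built from `n` blocks. -/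
def blockDiag {n d d' : ℕ} (A : Fin n → Matrix (Fin d) (Fin d') ℝ) :
    Matrix (Fin n × Fin d) (Fin n × Fin d') ℝ :=
  Matrix.of fun p q => if p.1 = q.1 then A p.1 p.2 q.2 else 0

/-- Hessian of `gi` w.r.t. the second (inner) variable: entry `(a,b)` is `∂_{y_a}∂_{y_b} gi(x,y)`. -/
def hessYY {d1 d2 : ℕ} (gi : Vec d1 → Vec d2 → ℝ) (x : Vec d1) (y : Vec d2) :
    Matrix (Fin d2) (Fin d2) ℝ :=
  Matrix.of fun a b =>
    fderiv ℝ (fun y' => fderiv ℝ (gi x) y' (EuclideanSpace.single b 1)) y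
      (EuclideanSpace.single a 1)

/-- Mixed Hessian of `gi`: entry `(a,b)` is `∂_{x_a}∂_{y_b} gi(x,y)`. -/
def hessXY {d1 d2 : ℕ} (gi : Vec d1 → Vec d2 → ℝ) (x : Vec d1) (y : Vec d2) :
    Matrix (Fin d1) (Fin d2) ℝ :=
  Matrix.of fun a b =>
    fderiv ℝ (fun x' => fderiv ℝ (gi x') y (EuclideanSpace.single b 1)) x
      (EuclideanSpace.single a 1)

/-- Extended mixing matrix `W ⊗ I_d`. -/
def kron1 {n : ℕ} (W : Matrix (Fin n) (Fin n) ℝ) (d : ℕ) :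
    Matrix (Fin n × Fin d) (Fin n × Fin d) ℝ :=
  W ⊗ₖ (1 : Matrix (Fin d) (Fin d) ℝ)

/-- `diag(W) ⊗ I_d`. -/
def kronDiag {n : ℕ} (W : Matrix (Fin n) (Fin n) ℝ) (d : ℕ) :
    Matrix (Fin n × Fin d) (Fin n × Fin d) ℝ :=
  (Matrix.diagonal fun i => W i i) ⊗ₖ (1 : Matrix (Fin d) (Fin d) ℝ)

/-- Assumption 1 of the paper: nonnegative, symmetric, doubly stochastic mixing matrix whose
`1`-eigenspace is the consensus direction, with diagonal entries in `[θ, Θ] ⊆ (0,1)`. -/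
structure IsMixingMatrix {n : ℕ} (W : Matrix (Fin n) (Fin n) ℝ) (θ Θ : ℝ) : Prop where
  symm : W.IsSymm
  nonneg : ∀ i j, 0 ≤ W i j
  row_sum : ∀ i, ∑ j, W i j = 1
  col_sum : ∀ j, ∑ i, W i j = 1
  null_iff : ∀ v : Fin n → ℝ, (1 - W) *ᵥ v = 0 ↔ ∃ c : ℝ, ∀ i, v i = c
  theta_pos : 0 < θ
  theta_le_diag : ∀ i, θ ≤ W i i
  diag_le_Theta : ∀ i, W i i ≤ Θ
  Theta_lt_one : Θ < 1

/-- `σ` is the spectral (`ℓ₂`-operator) norm of `W − (1/n) 1ₙ1ₙᵀ`, i.e. the mixing rate. -/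
def IsMixingRate {n : ℕ} (W : Matrix (Fin n) (Fin n) ℝ) (σ : ℝ) : Prop :=
  IsGreatest {c : ℝ | ∃ v : EuclideanSpace ℝ (Fin n), ‖v‖ = 1 ∧
    c = ‖Matrix.toEuclideanLin (W - Matrix.of fun _ _ => (1 / (n : ℝ))) v‖} σ

/-- `c` is the smallest nonzero eigenvalue of `A`. -/
def IsSmallestNonzeroEigenvalue {m : Type*} [Fintype m] [DecidableEq m]
    (A : Matrix m m ℝ) (c : ℝ) : Prop :=
  IsLeast {t : ℝ | t ≠ 0 ∧ Module.End.HasEigenvalue (Matrix.toEuclideanLin A) t} c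

/-- `c` is the largest eigenvalue of `A`. -/
def IsLargestEigenvalue {m : Type*} [Fintype m] [DecidableEq m]
    (A : Matrix m m ℝ) (c : ℝ) : Prop :=
  IsGreatest {t : ℝ | Module.End.HasEigenvalue (Matrix.toEuclideanLin A) t} c

/-- Concatenated partial gradient `∇ₓ𝐟(x,y)`. -/
def gradX {n d1 d2 : ℕ} (f : Fin n → Vec d1 → Vec d2 → ℝ) (x : BVec n d1) (y : BVec n d2) :
    BVec n d1 :=
  WithLp.toLp 2 (fun p : Fin n × Fin d1 => gradient (fun u => f p.1 u (blk y p.1)) (blk x p.1) p.2)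

/-- Concatenated partial gradient `∇_y𝐟(x,y)`. -/
def gradY {n d1 d2 : ℕ} (f : Fin n → Vec d1 → Vec d2 → ℝ) (x : BVec n d1) (y : BVec n d2) :
    BVec n d2 :=
  WithLp.toLp 2 (fun p : Fin n × Fin d2 => gradient (fun v => f p.1 (blk x p.1) v) (blk y p.1) p.2)

/-- Block-diagonal inner Hessian `∇²_y 𝐠(x,y)`. -/
def bigHessYY {n d1 d2 : ℕ} (g : Fin n → Vec d1 → Vec d2 → ℝ) (x : BVec n d1) (y : BVec n d2) :
    Matrix (Fin n × Fin d2) (Fin n × Fin d2) ℝ :=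
  blockDiag fun i => hessYY (g i) (blk x i) (blk y i)

/-- Block-diagonal mixed Hessian `∇²_{xy} 𝐠(x,y)`. -/
def bigHessXY {n d1 d2 : ℕ} (g : Fin n → Vec d1 → Vec d2 → ℝ) (x : BVec n d1) (y : BVec n d2) :
    Matrix (Fin n × Fin d1) (Fin n × Fin d2) ℝ :=
  blockDiag fun i => hessXY (g i) (blk x i) (blk y i)

/-- `H(x,y) := (I − W⊗I) + β ∇²_y 𝐠(x,y)`. -/
def Hmat {n d1 d2 : ℕ} (W : Matrix (Fin n) (Fin n) ℝ) (β : ℝ)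
    (g : Fin n → Vec d1 → Vec d2 → ℝ) (x : BVec n d1) (y : BVec n d2) :
    Matrix (Fin n × Fin d2) (Fin n × Fin d2) ℝ :=
  (1 - kron1 W d2) + β • bigHessYY g x y

/-- `D(x,y) := β ∇²_y 𝐠(x,y) + 2(I − diag(W⊗I))`. -/
def Dmat {n d1 d2 : ℕ} (W : Matrix (Fin n) (Fin n) ℝ) (β : ℝ)
    (g : Fin n → Vec d1 → Vec d2 → ℝ) (x : BVec n d1) (y : BVec n d2) :
    Matrix (Fin n × Fin d2) (Fin n × Fin d2) ℝ :=
  β • bigHessYY g x y + (2 : ℝ) • (1 - kronDiag W d2)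

/-- `B := I − 2 diag(W⊗I) + W⊗I`. -/
def Bmat {n : ℕ} (W : Matrix (Fin n) (Fin n) ℝ) (d : ℕ) :
    Matrix (Fin n × Fin d) (Fin n × Fin d) ℝ :=
  (1 : Matrix (Fin n × Fin d) (Fin n × Fin d) ℝ) - (2 : ℝ) • kronDiag W d + kron1 W d

/-- Penalized inner objective `G(x,y)`. -/
def Gpen {n d1 d2 : ℕ} (W : Matrix (Fin n) (Fin n) ℝ) (β : ℝ)
    (g : Fin n → Vec d1 → Vec d2 → ℝ) (x : BVec n d1) (y : BVec n d2) : ℝ :=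
  (1 / (2 * β)) * ⟪y, Matrix.toEuclideanLin (1 - kron1 W d2) y⟫ +
    ∑ i, g i (blk x i) (blk y i)

/-- `∇_y G(x,y) = (1/β)(I − W⊗I) y + ∇_y 𝐠(x,y)`. -/
def gradYG {n d1 d2 : ℕ} (W : Matrix (Fin n) (Fin n) ℝ) (β : ℝ)
    (g : Fin n → Vec d1 → Vec d2 → ℝ) (x : BVec n d1) (y : BVec n d2) : BVec n d2 :=
  (1 / β) • Matrix.toEuclideanLin (1 - kron1 W d2) y + gradY g x y

/-- Penalized outer objective `F(x) = F(x, y̌*(x))`, for a given inner-solution map `ycheck`. -/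
def Fpen {n d1 d2 : ℕ} (W : Matrix (Fin n) (Fin n) ℝ) (α : ℝ)
    (f : Fin n → Vec d1 → Vec d2 → ℝ) (ycheck : BVec n d1 → BVec n d2) (x : BVec n d1) : ℝ :=
  (1 / (2 * α)) * ⟪x, Matrix.toEuclideanLin (1 - kron1 W d1) x⟫ +
    ∑ i, f i (blk x i) (blk (ycheck x) i)

/-- Truncated Neumann-series approximation `Ĥ⁻¹_{(U)} = Σ_{u=0}^U (D⁻¹B)ᵘ D⁻¹
( = D^{-1/2} Σ_{u=0}^U (D^{-1/2} B D^{-1/2})ᵘ D^{-1/2})`. -/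
def truncInv {n d1 d2 : ℕ} (W : Matrix (Fin n) (Fin n) ℝ) (β : ℝ)
    (g : Fin n → Vec d1 → Vec d2 → ℝ) (U : ℕ) (x : BVec n d1) (y : BVec n d2) :
    Matrix (Fin n × Fin d2) (Fin n × Fin d2) ℝ :=
  ∑ u ∈ Finset.range (U + 1), ((Dmat W β g x y)⁻¹ * Bmat W d2) ^ u * (Dmat W β g x y)⁻¹

/-- DAGM hyper-gradient estimate `∇̂F(x,y)` (with `U`-truncated Neumann inverse). -/
def hyperGradHat {n d1 d2 : ℕ} (W : Matrix (Fin n) (Fin n) ℝ) (β α : ℝ)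
    (f g : Fin n → Vec d1 → Vec d2 → ℝ) (U : ℕ) (x : BVec n d1) (y : BVec n d2) : BVec n d1 :=
  (1 / α) • Matrix.toEuclideanLin (1 - kron1 W d1) x + gradX f x y
    - β • Matrix.toEuclideanLin (bigHessXY g x y * truncInv W β g U x y) (gradY f x y)

/-- Exact surrogate hyper-gradient `∇̃F(x,y)` (with the exact inverse `H(x,y)⁻¹`);
at `y = y̌*(x)` this is the true gradient `∇F(x, y̌*(x))` of the penalized problem. -/
def hyperGradExact {n d1 d2 : ℕ} (W : Matrix (Fin n) (Fin n) ℝ) (β α : ℝ)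
    (f g : Fin n → Vec d1 → Vec d2 → ℝ) (x : BVec n d1) (y : BVec n d2) : BVec n d1 :=
  (1 / α) • Matrix.toEuclideanLin (1 - kron1 W d1) x + gradX f x y
    - β • Matrix.toEuclideanLin (bigHessXY g x y * (Hmat W β g x y)⁻¹) (gradY f x y)

/-- Average of the blocks of a concatenated vector. -/
def blkAvg {n d : ℕ} (x : BVec n d) : Vec d := (1 / (n : ℝ)) • ∑ i, blk x i

end

/-!
Write `φ y = ∑ᵢ gᵢ(xᵢ, yᵢ)`, `Q y = yᵀ(I − 𝐖)y`, `P` for the orthogonal projection onto the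
consensus subspace and `c = y̌*_β(x)`. The mixing rate gives `(1 − σ)‖y − P y‖² ≤ Q y`. Comparing
the strongly convex `G_β = Q/(2β) + φ` at its minimiser `c` with `G_β y* = φ y*` gives
`Q c/(2β) + φ c + μ/4 ‖y* − c‖² ≤ φ y* ≤ φ (P c) ≤ φ c + L̂ ‖c − P c‖`,
where `L̂` is a Lipschitz constant of the convex `φ` on a ball around `y*` containing every `c`
and `P c`; such a ball exists, independently of `β`, because `φ c ≤ φ y*` and sublevel sets of a
strongly convex function are bounded. With `s = ‖c − P c‖` this reads
`(1 − σ)s²/(2β) + μ/4 ‖y* − c‖² ≤ L̂ s`, and maximising the left side over `s` gives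
`μ‖y* − c‖² ≤ 2βL̂²/(1 − σ)`.
-/

open Set Metric

section ConvexAnalysis

variable {E : Type*} [NormedAddCommGroup E]

theorem StrongConvexOn.add_norm_sub_sq_le_of_forall_le [NormedSpace ℝ E] {μ : ℝ} {f : E → ℝ}
    (hf : StrongConvexOn univ μ f) {c : E} (hc : ∀ z, f c ≤ f z) (z : E) :
    f c + μ / 4 * ‖z - c‖ ^ 2 ≤ f z := by
  have hmid := hf.2 (mem_univ z) (mem_univ c) (by norm_num : (0 : ℝ) ≤ 1 / 2)
    (by norm_num : (0 : ℝ) ≤ 1 / 2) (by norm_num)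
  simp only [smul_eq_mul] at hmid
  linarith [hc ((1 / 2 : ℝ) • z + (1 / 2 : ℝ) • c)]

theorem StrongConvexOn.convexOn [NormedSpace ℝ E] {s : Set E} {μ : ℝ} {f : E → ℝ}
    (hf : StrongConvexOn s μ f) (hμ : 0 ≤ μ) : ConvexOn ℝ s f :=
  UniformConvexOn.convexOn hf fun _ => by dsimp; positivity

theorem ConvexOn.exists_lipschitzOnWith_closedBall [NormedSpace ℝ E] [FiniteDimensional ℝ E]
    {f : E → ℝ} (hf : ConvexOn ℝ univ f) (x : E) (r : ℝ) :
    ∃ K, LipschitzOnWith K f (closedBall x r) :=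
  hf.locallyLipschitz.locallyLipschitzOn.exists_lipschitzOnWith_of_compact
    (isCompact_closedBall x r)

theorem LipschitzOnWith.le_add_mul_norm_sub {K : NNReal} {f : E → ℝ} {s : Set E}
    (hf : LipschitzOnWith K f s) {a b : E} (ha : a ∈ s) (hb : b ∈ s) :
    f a ≤ f b + K * ‖a - b‖ := by
  have h := hf.dist_le_mul a ha b hb
  rw [Real.dist_eq, dist_eq_norm] at h
  linarith [le_abs_self (f a - f b)]

theorem StrongConvexOn.exists_norm_sub_le_of_le [NormedSpace ℝ E] [FiniteDimensional ℝ E]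
    {μ : ℝ} {f : E → ℝ} (hf : StrongConvexOn univ μ f) (hμ : 0 < μ) (y₀ : E) :
    ∃ R, ∀ y, f y ≤ f y₀ → ‖y - y₀‖ ≤ R := by
  obtain ⟨K, hK⟩ := (hf.convexOn hμ.le).exists_lipschitzOnWith_closedBall y₀ 1
  refine ⟨1 + 2 * K / μ, fun y hy => ?_⟩
  set r := ‖y - y₀‖
  rcases le_or_gt r 1 with hr | hr
  · have : 0 ≤ 2 * K / μ := by positivity
    linarith
  have hr0 : 0 < r := by linarith
  set p := r⁻¹ • y + (1 - r⁻¹) • y₀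
  have hp : ‖p - y₀‖ = 1 := by
    rw [show p - y₀ = r⁻¹ • (y - y₀) by simp only [p]; module, norm_smul, norm_inv, norm_norm,
      inv_mul_cancel₀ hr0.ne']
  have hconv := hf.2 (mem_univ y) (mem_univ y₀) (inv_nonneg.2 hr0.le)
    (sub_nonneg.2 (inv_le_one_of_one_le₀ hr.le)) (add_sub_cancel _ _)
  have hLip := hK.le_add_mul_norm_sub (mem_closedBall_self zero_le_one)
    (mem_closedBall.2 (dist_eq_norm p y₀ ▸ hp.le))
  rw [norm_sub_rev, hp, mul_one] at hLip
  have hgain : r⁻¹ * (1 - r⁻¹) * (μ / 2 * r ^ 2) = μ / 2 * (r - 1) := by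
    field_simp
  simp only [smul_eq_mul] at hconv
  rw [show ‖y - y₀‖ = r from rfl, hgain] at hconv
  have hfy := mul_le_mul_of_nonneg_left hy (inv_nonneg.2 hr0.le)
  rw [← sub_le_iff_le_add', le_div_iff₀ hμ]
  linarith

theorem convexOn_inner_map_self [InnerProductSpace ℝ E] (T : E →ₗ[ℝ] E)
    (hT : ∀ y, 0 ≤ ⟪y, T y⟫) : ConvexOn ℝ univ fun y => ⟪y, T y⟫ := by
  refine ⟨convex_univ, fun y _ z _ a b ha hb hab => ?_⟩
  -- valid for any bilinear form once `a + b = 1`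
  have hexpand : ⟪a • y + b • z, T (a • y + b • z)⟫
      = a * ⟪y, T y⟫ + b * ⟪z, T z⟫ - a * b * ⟪y - z, T (y - z)⟫ := by
    obtain rfl : b = 1 - a := by linarith
    simp only [map_add, map_sub, map_smul, inner_add_left, inner_add_right, inner_sub_left,
      inner_sub_right, real_inner_smul_left, real_inner_smul_right]
    ring
  simp only [smul_eq_mul, hexpand]
  nlinarith [hT (y - z), mul_nonneg ha hb]

section Penalty

variable [InnerProductSpace ℝ E] [FiniteDimensional ℝ E]

theorem norm_sub_penalized_minimizer_sq_le {φ Q : E → ℝ} {μ κ β : ℝ} {K : Submodule ℝ E}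
    (hφ : StrongConvexOn univ μ φ) (hQ : ConvexOn ℝ univ Q) (hκ : 0 < κ) (hβ : 0 < β)
    (hQK : ∀ y, κ * ‖y - K.starProjection y‖ ^ 2 ≤ Q y)
    {ystar : E} (hQystar : Q ystar = 0) (hystar : ∀ k ∈ K, φ ystar ≤ φ k)
    {L : NNReal} {s : Set E} (hL : LipschitzOnWith L φ s)
    {c : E} (hc : ∀ y, 1 / (2 * β) * Q c + φ c ≤ 1 / (2 * β) * Q y + φ y)
    (hcs : c ∈ s) (hPcs : K.starProjection c ∈ s) :
    μ * ‖ystar - c‖ ^ 2 ≤ 2 * β * L ^ 2 / κ := by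
  have hG : StrongConvexOn univ μ fun y => 1 / (2 * β) * Q y + φ y := by
    have h := (hQ.smul (by positivity : 0 ≤ 1 / (2 * β))).uniformConvexOn_zero.add hφ
    rw [zero_add] at h
    exact h
  have hgrowth := hG.add_norm_sub_sq_le_of_forall_le hc ystar
  have hproj := hystar _ (K.starProjection_apply_mem c)
  have hLip := hL.le_add_mul_norm_sub hPcs hcs
  have hcons := hQK c
  set t := ‖ystar - c‖
  set u := ‖K.starProjection c - c‖
  rw [norm_sub_rev] at hcons
  rw [hQystar, mul_zero, zero_add] at hgrowth
  have hpen : κ * u ^ 2 / (2 * β) ≤ 1 / (2 * β) * Q c := by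
    rw [one_div_mul_eq_div]
    exact div_le_div_of_nonneg_right hcons (by positivity)
  have hkey : κ * u ^ 2 + β * μ / 2 * t ^ 2 ≤ 2 * β * L * u := by
    have h := mul_le_mul_of_nonneg_left
      (by linarith : κ * u ^ 2 / (2 * β) + μ / 4 * t ^ 2 ≤ L * u) (by positivity : 0 ≤ 2 * β)
    field_simp at h
    linarith
  -- AM-GM: `2βLu ≤ κu² + β²L²/κ`
  have hβt : β * (μ * t ^ 2 * κ) ≤ β * (2 * β * L ^ 2) := by
    nlinarith [sq_nonneg (κ * u - β * L)]
  rw [le_div_iff₀ hκ]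
  exact le_of_mul_le_mul_left hβt hβ

theorem exists_norm_sub_penalized_minimizer_sq_le {φ Q : E → ℝ} {μ κ : ℝ} {K : Submodule ℝ E}
    (hφ : StrongConvexOn univ μ φ) (hμ : 0 < μ) (hQ : ConvexOn ℝ univ Q) (hκ : 0 < κ)
    (hQK : ∀ y, κ * ‖y - K.starProjection y‖ ^ 2 ≤ Q y)
    {ystar : E} (hystarK : ystar ∈ K) (hQystar : Q ystar = 0) (hystar : ∀ k ∈ K, φ ystar ≤ φ k) :
    ∃ L : ℝ, 0 ≤ L ∧ ∀ β, 0 < β → ∀ c : E,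
      (∀ y, 1 / (2 * β) * Q c + φ c ≤ 1 / (2 * β) * Q y + φ y) →
        μ * ‖ystar - c‖ ^ 2 ≤ 2 * β * L ^ 2 / κ := by
  obtain ⟨R, hR⟩ := hφ.exists_norm_sub_le_of_le hμ ystar
  obtain ⟨L, hL⟩ := (hφ.convexOn hμ.le).exists_lipschitzOnWith_closedBall ystar R
  refine ⟨L, L.2, fun β hβ c hc => ?_⟩
  have hcR : ‖c - ystar‖ ≤ R := by
    refine hR c ?_
    have hQc : 0 ≤ 1 / (2 * β) * Q c :=
      mul_nonneg (by positivity) ((by positivity : 0 ≤ κ * _).trans (hQK c))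
    have hcy := hc ystar
    rw [hQystar, mul_zero] at hcy
    linarith
  refine norm_sub_penalized_minimizer_sq_le hφ hQ hκ hβ hQK hQystar hystar hL hc
    (mem_closedBall_iff_norm.2 hcR) (mem_closedBall_iff_norm.2 ?_)
  calc ‖K.starProjection c - ystar‖ = ‖K.starProjection (c - ystar)‖ := by
        rw [map_sub, K.starProjection_eq_self_iff.2 hystarK]
    _ ≤ R := (K.norm_starProjection_apply_le _).trans hcR

end Penalty

end ConvexAnalysis

theorem EuclideanSpace.real_inner_eq_sum {ι : Type*} [Fintype ι] (y z : EuclideanSpace ℝ ι) :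
    ⟪y, z⟫ = ∑ i, y i * z i := by
  simp only [PiLp.inner_apply, RCLike.inner_apply, conj_trivial, mul_comm]

section Mixing

variable {n : ℕ} {W : Matrix (Fin n) (Fin n) ℝ} {σ : ℝ}

theorem IsMixingRate.pos (hσ : IsMixingRate W σ) : 0 < n := by
  obtain ⟨⟨v, hv, -⟩, -⟩ := hσ
  refine Nat.pos_of_ne_zero fun hn => ?_
  subst hn
  simp [Subsingleton.elim v 0] at hv

theorem IsMixingRate.norm_apply_le (hσ : IsMixingRate W σ) (u : EuclideanSpace ℝ (Fin n)) :
    ‖toEuclideanLin (W - of fun _ _ => 1 / (n : ℝ)) u‖ ≤ σ * ‖u‖ := by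
  rcases eq_or_ne u 0 with rfl | hu
  · simp
  have hu' : 0 < ‖u‖ := norm_pos_iff.2 hu
  have hunit := hσ.2 ⟨‖u‖⁻¹ • u, by rw [norm_smul, norm_inv, norm_norm, inv_mul_cancel₀ hu'.ne'],
    rfl⟩
  rw [map_smul, norm_smul, norm_inv, norm_norm, inv_mul_le_iff₀ hu'] at hunit
  linarith

theorem IsMixingRate.sum_mul_sum_le (hσ : IsMixingRate W σ) {u : Fin n → ℝ}
    (hu : ∑ i, u i = 0) : ∑ i, u i * ∑ j, W i j * u j ≤ σ * ∑ i, u i ^ 2 := by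
  set U : EuclideanSpace ℝ (Fin n) := WithLp.toLp 2 u
  -- the averaging part of `W - 𝟙𝟙ᵀ/n` kills `u`
  have hWU : ∀ i, toEuclideanLin (W - of fun _ _ => 1 / (n : ℝ)) U i = ∑ j, W i j * u j := by
    intro i
    simp [U, mulVec, dotProduct, ← Finset.mul_sum, hu]
  calc ∑ i, u i * ∑ j, W i j * u j = ⟪U, toEuclideanLin (W - of fun _ _ => 1 / (n : ℝ)) U⟫ := by
        simp only [EuclideanSpace.real_inner_eq_sum, hWU]; rfl
    _ ≤ ‖U‖ * (σ * ‖U‖) := (real_inner_le_norm _ _).trans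
        (mul_le_mul_of_nonneg_left (hσ.norm_apply_le U) (norm_nonneg _))
    _ = σ * ∑ i, u i ^ 2 := by
        rw [← mul_assoc, mul_comm ‖U‖, mul_assoc, ← sq, EuclideanSpace.real_norm_sq_eq]

theorem sum_mul_sub_sum_mul_add_const {ι : Type*} [Fintype ι] {W : Matrix ι ι ℝ}
    (hrow : ∀ i, ∑ j, W i j = 1) (hcol : ∀ j, ∑ i, W i j = 1) (u : ι → ℝ) (m : ℝ) :
    ∑ i, (u i + m) * (u i + m - ∑ j, W i j * (u j + m)) = ∑ i, u i * (u i - ∑ j, W i j * u j) := by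
  have hshift : ∀ i, u i + m - ∑ j, W i j * (u j + m) = u i - ∑ j, W i j * u j := fun i => by
    simp only [mul_add, Finset.sum_add_distrib, ← Finset.sum_mul, hrow, one_mul]
    ring
  have hsum : ∑ i, (u i - ∑ j, W i j * u j) = 0 := by
    simp only [Finset.sum_sub_distrib, Finset.sum_comm (γ := ι) (f := fun i j => W i j * u j),
      ← Finset.sum_mul, hcol, one_mul, sub_self]
  simp only [hshift, add_mul, Finset.sum_add_distrib, ← Finset.mul_sum, hsum, mul_zero, add_zero]

theorem IsMixingRate.mul_sum_sq_sub_mean_le (hσ : IsMixingRate W σ) (hrow : ∀ i, ∑ j, W i j = 1)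
    (hcol : ∀ j, ∑ i, W i j = 1) (v : Fin n → ℝ) :
    (1 - σ) * ∑ i, (v i - (∑ j, v j) / n) ^ 2 ≤ ∑ i, v i * (v i - ∑ j, W i j * v j) := by
  set m := (∑ j, v j) / n
  have hu : ∑ i, (v i - m) = 0 := by
    rw [Finset.sum_sub_distrib, Finset.sum_const, Finset.card_univ, Fintype.card_fin, nsmul_eq_mul,
      mul_div_cancel₀ _ (Nat.cast_ne_zero.2 hσ.pos.ne'), sub_self]
  have hshift := sum_mul_sub_sum_mul_add_const hrow hcol (fun i => v i - m) m
  simp only [sub_add_cancel] at hshift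
  have hmix := hσ.sum_mul_sum_le hu
  rw [hshift]
  simp only [mul_sub, Finset.sum_sub_distrib, sub_mul, one_mul, ← sq] at hmix ⊢
  linarith

end Mixing

section Blocks

variable {n d : ℕ}

def blkLinearMap (i : Fin n) : BVec n d →ₗ[ℝ] Vec d where
  toFun y := blk y i
  map_add' _ _ := rfl
  map_smul' _ _ := rfl

theorem norm_sq_eq_sum_norm_blk_sq (y : BVec n d) : ‖y‖ ^ 2 = ∑ i, ‖blk y i‖ ^ 2 := by
  simp only [EuclideanSpace.real_norm_sq_eq, Fintype.sum_prod_type]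
  rfl

theorem StrongConvexOn.sum_blk {μ : ℝ} {h : Fin n → Vec d → ℝ}
    (hh : ∀ i, StrongConvexOn univ μ (h i)) :
    StrongConvexOn univ μ fun y : BVec n d => ∑ i, h i (blk y i) := by
  simp only [strongConvexOn_iff_convex] at hh ⊢
  have hsplit : (fun y : BVec n d => ∑ i, h i (blk y i) - μ / 2 * ‖y‖ ^ 2)
      = ∑ i, (fun z => h i z - μ / 2 * ‖z‖ ^ 2) ∘ blkLinearMap i := by
    ext y
    simp only [norm_sq_eq_sum_norm_blk_sq y, Finset.mul_sum, ← Finset.sum_sub_distrib,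
      Finset.sum_apply, Function.comp_apply]
    rfl
  rw [hsplit]
  exact Finset.sum_induction _ (ConvexOn ℝ univ) (fun _ _ => ConvexOn.add)
    (convexOn_const 0 convex_univ) fun i _ => (hh i).comp_linearMap (blkLinearMap i)

end Blocks

section Consensus

variable {n d : ℕ} {W : Matrix (Fin n) (Fin n) ℝ} {σ : ℝ}

noncomputable def consensusSubspace (W : Matrix (Fin n) (Fin n) ℝ) (d : ℕ) :
    Submodule ℝ (BVec n d) :=
  LinearMap.ker (toEuclideanLin (1 - kron1 W d))

noncomputable def consensusAvg (y : BVec n d) : BVec n d := WithLp.toLp 2 fun p => blkAvg y p.2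

theorem consensusAvg_apply (y : BVec n d) (p : Fin n × Fin d) :
    consensusAvg y p = (∑ j, y (j, p.2)) / n := by
  simp [consensusAvg, blkAvg, blk, div_eq_inv_mul]

theorem toEuclideanLin_one_sub_kron1_apply (W : Matrix (Fin n) (Fin n) ℝ) (y : BVec n d)
    (p : Fin n × Fin d) :
    toEuclideanLin (1 - kron1 W d) y p = y p - ∑ j, W p.1 j * y (j, p.2) := by
  simp [kron1, mulVec, dotProduct, Matrix.one_apply, Fintype.sum_prod_type]

theorem consensusAvg_mem (hrow : ∀ i, ∑ j, W i j = 1) (y : BVec n d) :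
    consensusAvg y ∈ consensusSubspace W d := by
  ext p
  simp only [toEuclideanLin_one_sub_kron1_apply, consensusAvg_apply, ← Finset.sum_mul, hrow,
    one_mul, sub_self]
  rfl

theorem inner_toEuclideanLin_one_sub_kron1 (W : Matrix (Fin n) (Fin n) ℝ) (y : BVec n d) :
    ⟪y, toEuclideanLin (1 - kron1 W d) y⟫
      = ∑ a, ∑ i, y (i, a) * (y (i, a) - ∑ j, W i j * y (j, a)) := by
  rw [EuclideanSpace.real_inner_eq_sum, Fintype.sum_prod_type, Finset.sum_comm]
  simp only [toEuclideanLin_one_sub_kron1_apply]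

theorem IsMixingRate.mul_norm_sub_consensusAvg_sq_le (hσ : IsMixingRate W σ)
    (hrow : ∀ i, ∑ j, W i j = 1) (hcol : ∀ j, ∑ i, W i j = 1) (y : BVec n d) :
    (1 - σ) * ‖y - consensusAvg y‖ ^ 2 ≤ ⟪y, toEuclideanLin (1 - kron1 W d) y⟫ := by
  rw [inner_toEuclideanLin_one_sub_kron1, EuclideanSpace.real_norm_sq_eq, Fintype.sum_prod_type,
    Finset.sum_comm, Finset.mul_sum]
  refine Finset.sum_le_sum fun a _ => ?_
  simpa only [PiLp.sub_apply, consensusAvg_apply] using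
    hσ.mul_sum_sq_sub_mean_le hrow hcol fun i => y (i, a)

theorem IsMixingRate.mul_norm_sub_starProjection_sq_le (hσ : IsMixingRate W σ) (hσ1 : σ ≤ 1)
    (hrow : ∀ i, ∑ j, W i j = 1) (hcol : ∀ j, ∑ i, W i j = 1) (y : BVec n d) :
    (1 - σ) * ‖y - (consensusSubspace W d).starProjection y‖ ^ 2
      ≤ ⟪y, toEuclideanLin (1 - kron1 W d) y⟫ := by
  refine le_trans ?_ (hσ.mul_norm_sub_consensusAvg_sq_le hrow hcol y)
  have hmin : ‖y - (consensusSubspace W d).starProjection y‖ ≤ ‖y - consensusAvg y‖ := by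
    rw [Submodule.starProjection_minimal]
    have hbdd : BddBelow (range fun k : consensusSubspace W d => ‖y - k‖) :=
      ⟨0, by rintro _ ⟨k, rfl⟩; exact norm_nonneg _⟩
    exact ciInf_le hbdd (⟨consensusAvg y, consensusAvg_mem hrow y⟩ : consensusSubspace W d)
  have h1σ : 0 ≤ 1 - σ := by linarith
  gcongr

end Consensus

theorem le_add_of_mul_sq_le {t L β κ μ : ℝ} (ht : 0 ≤ t) (hL : 0 ≤ L) (hβ : 0 < β) (hκ : 0 < κ)
    (hμ : 0 < μ) (h : μ * t ^ 2 ≤ 2 * β * L ^ 2 / κ) :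
    t ≤ 2 * (L + 1) * β / κ + 2 * (L + 1) * √β / (√κ * √μ) := by
  have hsqrt : t ≤ 2 * (L + 1) * √β / (√κ * √μ) := by
    rw [le_div_iff₀ (by positivity), ← pow_le_pow_iff_left₀ (by positivity) (by positivity)
      two_ne_zero, mul_pow, mul_pow, mul_pow, Real.sq_sqrt hβ.le, Real.sq_sqrt hκ.le,
      Real.sq_sqrt hμ.le]
    rw [le_div_iff₀ hκ] at h
    nlinarith
  have : 0 ≤ 2 * (L + 1) * β / κ := by positivity
  linarith

theorem penalty_approximation_inner_solution_general {n d1 d2 : ℕ}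
    (W : Matrix (Fin n) (Fin n) ℝ) (θ Θ : ℝ)
    (hW : IsMixingMatrix W θ Θ)
    (σ : ℝ) (hσ : IsMixingRate W σ) (hσ1 : σ < 1)
    (g : Fin n → Vec d1 → Vec d2 → ℝ)
    (μg : ℝ) (hμg : 0 < μg)
    (x : BVec n d1)
    (hsc : ∀ i, StrongConvexOn Set.univ μg (g i (blk x i)))
    (ystar : BVec n d2)
    (hconsensus : Matrix.toEuclideanLin (1 - kron1 W d2) ystar = 0)
    (hystar : ∀ y : BVec n d2, Matrix.toEuclideanLin (1 - kron1 W d2) y = 0 →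
      ∑ i, g i (blk x i) (blk ystar i) ≤ ∑ i, g i (blk x i) (blk y i))
    (ycheck : ℝ → BVec n d2)
    (hycheck : ∀ β : ℝ, 0 < β → β ≤ 1 →
      ∀ y : BVec n d2, Gpen W β g x (ycheck β) ≤ Gpen W β g x y) :
    ∃ Lhat : ℝ, 0 < Lhat ∧ ∀ β : ℝ, 0 < β → β ≤ 1 →
      ‖ystar - ycheck β‖ ≤
        2 * Lhat * β / (1 - σ) +
          2 * Lhat * Real.sqrt β / (Real.sqrt (1 - σ) * Real.sqrt μg) := by
  have hQK := hσ.mul_norm_sub_starProjection_sq_le (d := d2) hσ1.le hW.row_sum hW.col_sum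
  have hQ : ConvexOn ℝ Set.univ fun y : BVec n d2 => ⟪y, toEuclideanLin (1 - kron1 W d2) y⟫ :=
    convexOn_inner_map_self _ fun y =>
      (mul_nonneg (sub_nonneg.2 hσ1.le) (sq_nonneg _)).trans (hQK y)
  obtain ⟨L, hL, hbound⟩ := exists_norm_sub_penalized_minimizer_sq_le
    (StrongConvexOn.sum_blk hsc) hμg hQ (sub_pos.2 hσ1) hQK hconsensus
    (by rw [hconsensus, inner_zero_right]) hystar
  refine ⟨L + 1, by positivity, fun β hβ hβ1 => ?_⟩
  exact le_add_of_mul_sq_le (norm_nonneg _) hL hβ (sub_pos.2 hσ1) hμg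
    (hbound β hβ _ (hycheck β hβ hβ1))

theorem penalty_approximation_inner_solution {n d1 d2 : ℕ}
    (W : Matrix (Fin n) (Fin n) ℝ) (θ Θ : ℝ)
    (hW : IsMixingMatrix W θ Θ)
    (σ : ℝ) (hσ : IsMixingRate W σ) (hσ1 : σ < 1)
    (g : Fin n → Vec d1 → Vec d2 → ℝ)
    (μg : ℝ) (hμg : 0 < μg)
    (x : BVec n d1)
    (hsc : ∀ i, StrongConvexOn Set.univ μg (g i (blk x i)))
    (hcont : ∀ i, Continuous (g i (blk x i)))
    (ystar : BVec n d2)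
    (hconsensus : Matrix.toEuclideanLin (1 - kron1 W d2) ystar = 0)
    (hystar : ∀ y : BVec n d2, Matrix.toEuclideanLin (1 - kron1 W d2) y = 0 →
      ∑ i, g i (blk x i) (blk ystar i) ≤ ∑ i, g i (blk x i) (blk y i))
    (ycheck : ℝ → BVec n d2)
    (hycheck : ∀ β : ℝ, 0 < β → β ≤ 1 →
      ∀ y : BVec n d2, Gpen W β g x (ycheck β) ≤ Gpen W β g x y) :
    ∃ Lhat : ℝ, 0 < Lhat ∧ ∀ β : ℝ, 0 < β → β ≤ 1 →
      ‖ystar - ycheck β‖ ≤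
        2 * Lhat * β / (1 - σ) +
          2 * Lhat * Real.sqrt β / (Real.sqrt (1 - σ) * Real.sqrt μg) :=
  penalty_approximation_inner_solution_general W θ Θ hW σ hσ hσ1 g μg hμg x hsc ystar hconsensus
    hystar ycheck hycheck
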